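/- Let η be a norm on ℝ², let A be a point of the unit η-circle, and let w ∈ [0, 2π(η)). For every sequence of n ≥ 1 points contained in cone(A, w), there exists a wake-up tree rooted at the origin spanning these points whose makespan (in the η-norm) is at most 1 + w·⌊log₂ n⌋. -/

import Mathlib

/-- Binary trees with labeled nodes. A wake-up tree with source `s` is modeled by the
subtree hanging at the unique child of the root (the root itself is labeled `s`). -/
inductive BTree (α : Type) where
  | nil : BTree α
  | node : α → BTree α → BTree α → BTree α

namespace BTree
/-- The multiset of labels of a binary tree. -/
def labels {α : Type} : BTree α → Multiset α
  | .nil => 0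
  | .node p l r => p ::ₘ (labels l + labels r)
end BTree

/-- `η` is a norm on `ℝ²`. -/
def IsNorm (η : ℝ × ℝ → ℝ) : Prop :=
  (∀ x, η x = 0 ↔ x = 0) ∧
  (∀ (a : ℝ) (x : ℝ × ℝ), η (a • x) = |a| * η x) ∧
  (∀ x y : ℝ × ℝ, η (x + y) ≤ η x + η y)

/-- The makespan of a wake-up tree: maximum total η-edge-length of a root-to-leaf path,
where the previous (parent) position is `s`. -/
noncomputable def makespan (η : ℝ × ℝ → ℝ) : ℝ × ℝ → BTree (ℝ × ℝ) → ℝ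
  | _, .nil => 0
  | s, .node p l r => η (p - s) + max (makespan η p l) (makespan η p r)

/-- `γₙ(η)`: sup over sequences of `n` points in the closed unit η-ball of the minimum
makespan of a wake-up tree rooted at the origin spanning them. -/
noncomputable def gammaN (η : ℝ × ℝ → ℝ) (n : ℕ) : ℝ :=
  sSup { m : ℝ | ∃ ps : List (ℝ × ℝ), ps.length = n ∧ (∀ p ∈ ps, η p ≤ 1) ∧
    m = sInf { t : ℝ | ∃ T : BTree (ℝ × ℝ), T.labels = ↑ps ∧ makespan η 0 T = t } }

/-- The wake-up ratio `γ(η) = sup_n γₙ(η)`. -/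
noncomputable def gamma (η : ℝ × ℝ → ℝ) : ℝ := sSup (Set.range (gammaN η))

/-- The ℓ1-norm on ℝ². -/
noncomputable def l1 (p : ℝ × ℝ) : ℝ := |p.1| + |p.2|
/-- η-variation (intrinsic length) of the curve `g` on `[a,b]`: sup over partitions. -/
noncomputable def etaVar (η : ℝ × ℝ → ℝ) (g : ℝ → ℝ × ℝ) (a b : ℝ) : ℝ :=
  sSup { L : ℝ | ∃ (m : ℕ) (θ : ℕ → ℝ), Monotone θ ∧ θ 0 = a ∧ θ m = b ∧
    L = ∑ i ∈ Finset.range m, η (g (θ (i + 1)) - g (θ i)) }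

/-- The point of the unit η-circle in direction of angle `θ`. -/
noncomputable def unitPoint (η : ℝ × ℝ → ℝ) (θ : ℝ) : ℝ × ℝ :=
  (η (Real.cos θ, Real.sin θ))⁻¹ • ((Real.cos θ, Real.sin θ) : ℝ × ℝ)

/-- `π(η)`: half the intrinsic length of the unit η-circle. -/
noncomputable def piEta (η : ℝ × ℝ → ℝ) : ℝ :=
  etaVar η (unitPoint η) 0 (2 * Real.pi) / 2

/-- `cone(A, w)` where `A = unitPoint η α`: union of segments `[O, X]` over points `X` of the
unit circle whose anticlockwise arc from `A` has length at most `w`. -/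
def cone (η : ℝ × ℝ → ℝ) (α w : ℝ) : Set (ℝ × ℝ) :=
  { x | ∃ θ t : ℝ, α ≤ θ ∧ etaVar η (unitPoint η) α θ ≤ w ∧
        0 ≤ t ∧ t ≤ 1 ∧ x = t • unitPoint η θ }

/-! Sort the points by norm and arrange them as a balanced binary heap, in which every node is
no farther from the origin than its children; its height is `⌊log₂ n⌋ + 1`. Inside the cone,
going from `q` to a point `p` with `η q ≤ η p` costs at most `η p - η q + w`: walk radially to
the level of `p`, then along a chord of the unit circle, which is no longer than the arc of
length `≤ w` it subtends. Along a root-to-leaf path of the heap the norm increases telescope to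
at most `1`, and each of the at most `⌊log₂ n⌋` edges below the root adds at most `w`. -/

namespace IsNorm

variable {η : ℝ × ℝ → ℝ} (hη : IsNorm η)
include hη

theorem map_zero : η 0 = 0 := (hη.1 0).2 rfl

theorem map_neg (x : ℝ × ℝ) : η (-x) = η x := by
  simpa using hη.2.1 (-1) x

theorem nonneg (x : ℝ × ℝ) : 0 ≤ η x := by
  have h := hη.2.2 x (-x)
  rw [add_neg_cancel, hη.map_zero, hη.map_neg] at h
  linarith

theorem map_sub_comm (x y : ℝ × ℝ) : η (x - y) = η (y - x) := by
  rw [← hη.map_neg, neg_sub]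

theorem abs_sub_le (x y : ℝ × ℝ) : |η x - η y| ≤ η (x - y) := by
  have hx := hη.2.2 (x - y) y
  have hy := hη.2.2 (y - x) x
  rw [sub_add_cancel] at hx hy
  rw [hη.map_sub_comm y x] at hy
  rw [abs_sub_le_iff]
  constructor <;> linarith

theorem le_coord (x : ℝ × ℝ) : η x ≤ |x.1| * η (1, 0) + |x.2| * η (0, 1) := by
  calc η x = η (x.1 • ((1 : ℝ), (0 : ℝ)) + x.2 • ((0 : ℝ), (1 : ℝ))) := by simp
    _ ≤ _ := by rw [← hη.2.1, ← hη.2.1]; exact hη.2.2 _ _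

theorem normalize_sub_le {x y : ℝ × ℝ} (hx : 0 < η x) (hy : 0 < η y) :
    η ((η x)⁻¹ • x - (η y)⁻¹ • y) ≤ 2 * η (x - y) / η x := by
  have hsplit : (η x)⁻¹ • x - (η y)⁻¹ • y =
      (η x)⁻¹ • (x - y) + ((η x)⁻¹ - (η y)⁻¹) • y := by module
  have hcoef : |(η x)⁻¹ - (η y)⁻¹| * η y = |η y - η x| / η x := by
    rw [inv_sub_inv hx.ne' hy.ne', abs_div, abs_mul, abs_of_pos hx, abs_of_pos hy]
    field_simp
  have hdiff : |η y - η x| ≤ η (x - y) := by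
    rw [abs_sub_comm]; exact hη.abs_sub_le x y
  calc η ((η x)⁻¹ • x - (η y)⁻¹ • y)
      ≤ |(η x)⁻¹| * η (x - y) + |(η x)⁻¹ - (η y)⁻¹| * η y := by
        rw [hsplit, ← hη.2.1, ← hη.2.1]; exact hη.2.2 _ _
    _ ≤ η (x - y) / η x + η (x - y) / η x := by
        rw [hcoef, abs_of_pos (inv_pos.2 hx), inv_mul_eq_div]
        gcongr
    _ = 2 * η (x - y) / η x := by ring

theorem cos_sin_sub_le (a b : ℝ) :
    η ((Real.cos a, Real.sin a) - (Real.cos b, Real.sin b)) ≤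
      (η (1, 0) + η (0, 1)) * |a - b| := by
  refine (hη.le_coord _).trans ?_
  have h1 := hη.nonneg (1, 0)
  have h2 := hη.nonneg (0, 1)
  have hc := Real.abs_cos_sub_cos_le a b
  have hs := Real.abs_sin_sub_sin_le a b
  simp only [Prod.fst_sub, Prod.snd_sub]
  nlinarith

theorem exists_pos_le_cos_sin : ∃ c > 0, ∀ θ : ℝ, c ≤ η (Real.cos θ, Real.sin θ) := by
  set N : ℝ → ℝ := fun θ => η (Real.cos θ, Real.sin θ)
  have hN : Continuous N := by
    refine (LipschitzWith.of_dist_le' (K := η (1, 0) + η (0, 1)) fun a b => ?_).continuous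
    rw [Real.dist_eq, Real.dist_eq]
    exact (hη.abs_sub_le _ _).trans (hη.cos_sin_sub_le a b)
  have hper : Function.Periodic N (2 * Real.pi) := fun θ => by
    simp only [N, Real.cos_add_two_pi, Real.sin_add_two_pi]
  obtain ⟨_, ⟨θ₀, rfl⟩, hmin⟩ :=
    (hper.compact_of_continuous Real.two_pi_pos.ne' hN).exists_isLeast (Set.range_nonempty N)
  refine ⟨N θ₀, ?_, fun θ => hmin ⟨θ, rfl⟩⟩
  refine (hη.nonneg _).lt_of_ne fun h => ?_
  have h0 := (hη.1 _).1 h.symm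
  simp only [Prod.mk_eq_zero] at h0
  simpa [h0.1, h0.2] using Real.cos_sq_add_sin_sq θ₀

theorem map_unitPoint (θ : ℝ) : η (unitPoint η θ) = 1 := by
  obtain ⟨c, hc, hle⟩ := hη.exists_pos_le_cos_sin
  have hpos := hc.trans_le (hle θ)
  rw [unitPoint, hη.2.1, abs_of_pos (inv_pos.2 hpos), inv_mul_cancel₀ hpos.ne']

theorem unitPoint_sub_le : ∃ K, ∀ a b : ℝ, η (unitPoint η a - unitPoint η b) ≤ K * |a - b| := by
  obtain ⟨c, hc, hle⟩ := hη.exists_pos_le_cos_sin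
  refine ⟨2 * (η (1, 0) + η (0, 1)) / c, fun a b => ?_⟩
  have ha := hc.trans_le (hle a)
  calc η (unitPoint η a - unitPoint η b)
      ≤ 2 * η ((Real.cos a, Real.sin a) - (Real.cos b, Real.sin b)) / η (Real.cos a, Real.sin a) :=
        hη.normalize_sub_le ha (hc.trans_le (hle b))
    _ ≤ 2 * ((η (1, 0) + η (0, 1)) * |a - b|) / c := by
        gcongr
        · exact mul_nonneg zero_le_two
            (mul_nonneg (add_nonneg (hη.nonneg _) (hη.nonneg _)) (abs_nonneg _))
        · exact hη.cos_sin_sub_le a b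
        · exact hle a
    _ = 2 * (η (1, 0) + η (0, 1)) / c * |a - b| := by ring

theorem chord_le_etaVar {g : ℝ → ℝ × ℝ} {K : ℝ}
    (hg : ∀ a b, η (g a - g b) ≤ K * |a - b|) {a θ₁ θ₂ : ℝ} (h₁ : a ≤ θ₁) (h₁₂ : θ₁ ≤ θ₂) :
    η (g θ₂ - g θ₁) ≤ etaVar η g a θ₂ := by
  set θ : ℕ → ℝ := fun i => if i = 0 then a else if i = 1 then θ₁ else θ₂
  have hθ : Monotone θ := monotone_nat_of_le_succ fun
    | 0 => by simpa [θ] using h₁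
    | 1 => by simpa [θ] using h₁₂
    | _ + 2 => by simp [θ]
  -- an unbounded set would make `etaVar` the junk value `0` and the claim false
  have hbdd : BddAbove {L : ℝ | ∃ (m : ℕ) (θ : ℕ → ℝ), Monotone θ ∧ θ 0 = a ∧ θ m = θ₂ ∧
      L = ∑ i ∈ Finset.range m, η (g (θ (i + 1)) - g (θ i))} := by
    refine ⟨K * (θ₂ - a), ?_⟩
    rintro _ ⟨m, θ, hθ, h0, hm, rfl⟩
    calc ∑ i ∈ Finset.range m, η (g (θ (i + 1)) - g (θ i))
        ≤ ∑ i ∈ Finset.range m, K * (θ (i + 1) - θ i) := Finset.sum_le_sum fun i _ => by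
          simpa [abs_of_nonneg (sub_nonneg.2 (hθ i.le_succ))] using hg (θ (i + 1)) (θ i)
      _ = K * (θ₂ - a) := by rw [← Finset.mul_sum, Finset.sum_range_sub, h0, hm]
  have hmem : η (g θ₁ - g a) + η (g θ₂ - g θ₁) ≤ etaVar η g a θ₂ :=
    le_csSup hbdd ⟨2, θ, hθ, rfl, rfl, by simp [θ, Finset.sum_range_succ]⟩
  linarith [hη.nonneg (g θ₁ - g a)]

theorem le_one_of_mem_cone {α w : ℝ} {x : ℝ × ℝ}
    (hx : x ∈ cone η α w) : η x ≤ 1 := by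
  obtain ⟨θ, t, -, -, ht₀, ht₁, rfl⟩ := hx
  rwa [hη.2.1, hη.map_unitPoint, abs_of_nonneg ht₀, mul_one]

theorem sub_le_of_mem_cone {α w : ℝ} {p q : ℝ × ℝ}
    (hp : p ∈ cone η α w) (hq : q ∈ cone η α w) (hqp : η q ≤ η p) :
    η (p - q) ≤ η p - η q + w := by
  obtain ⟨θ, t, hθ, hθw, ht₀, -, rfl⟩ := hp
  obtain ⟨θ', s, hθ', hθ'w, hs₀, hs₁, rfl⟩ := hq
  obtain ⟨K, hK⟩ := hη.unitPoint_sub_le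
  have hnorm : ∀ r, 0 ≤ r → ∀ φ, η (r • unitPoint η φ) = r := fun r hr φ => by
    rw [hη.2.1, hη.map_unitPoint, abs_of_nonneg hr, mul_one]
  rw [hnorm t ht₀, hnorm s hs₀] at hqp ⊢
  have hchord : η (unitPoint η θ - unitPoint η θ') ≤ w := by
    rcases le_total θ θ' with h | h
    · rw [hη.map_sub_comm]
      exact (hη.chord_le_etaVar hK hθ h).trans hθ'w
    · exact (hη.chord_le_etaVar hK hθ' h).trans hθw
  have hsplit : t • unitPoint η θ - s • unitPoint η θ' =
      (t - s) • unitPoint η θ + s • (unitPoint η θ - unitPoint η θ') := by module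
  calc η (t • unitPoint η θ - s • unitPoint η θ')
      ≤ η ((t - s) • unitPoint η θ) + η (s • (unitPoint η θ - unitPoint η θ')) :=
        hsplit ▸ hη.2.2 _ _
    _ = t - s + s * η (unitPoint η θ - unitPoint η θ') := by
        rw [hnorm _ (sub_nonneg.2 hqp), hη.2.1, abs_of_nonneg hs₀]
    _ ≤ t - s + w := by nlinarith [hη.nonneg (unitPoint η θ - unitPoint η θ')]

end IsNorm

namespace BTree

variable {α : Type}

def height : BTree α → ℕ
  | .nil => 0
  | .node _ l r => max l.height r.height + 1

def IsHeap (f : α → ℝ) : BTree α → Prop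
  | .nil => True
  | .node p l r => (∀ x ∈ l.labels + r.labels, f p ≤ f x) ∧ l.IsHeap f ∧ r.IsHeap f

def heapOf : List α → BTree α
  | [] => .nil
  | p :: rest => .node p (heapOf (rest.take (rest.length / 2)))
      (heapOf (rest.drop (rest.length / 2)))
termination_by l => l.length

theorem labels_heapOf (l : List α) : (heapOf l).labels = l := by
  induction l using heapOf.induct with
  | case1 => simp [heapOf, labels]
  | case2 p rest ih₁ ih₂ =>
    rw [heapOf, labels, ih₁, ih₂, Multiset.coe_add, List.take_append_drop, Multiset.cons_coe]

theorem isHeap_heapOf (f : α → ℝ) {l : List α} (hl : l.Pairwise (fun a b => f a ≤ f b)) :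
    (heapOf l).IsHeap f := by
  induction l using heapOf.induct with
  | case1 => simp [heapOf, IsHeap]
  | case2 p rest ih₁ ih₂ =>
    obtain ⟨hp, hrest⟩ := List.pairwise_cons.1 hl
    rw [heapOf, IsHeap, labels_heapOf, labels_heapOf, Multiset.coe_add, List.take_append_drop]
    exact ⟨fun x hx => hp x hx, ih₁ (hrest.sublist (List.take_sublist _ _)),
      ih₂ (hrest.sublist (List.drop_sublist _ _))⟩

theorem height_heapOf_le {l : List α} {n : ℕ} (hl : l.length < 2 ^ n) :
    (heapOf l).height ≤ n := by
  induction l using heapOf.induct generalizing n with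
  | case1 => simp [heapOf, height]
  | case2 p rest ih₁ ih₂ =>
    obtain _ | n := n
    · simp at hl
    rw [List.length_cons, pow_succ] at hl
    rw [heapOf, height, Nat.succ_le_succ_iff, max_le_iff]
    exact ⟨ih₁ (by rw [List.length_take]; omega), ih₂ (by rw [List.length_drop]; omega)⟩

theorem mem_labels_node_of_mem_left {p x : α} {l r : BTree α} (hx : x ∈ l.labels) :
    x ∈ (node p l r).labels :=
  Multiset.mem_cons_of_mem (Multiset.mem_add.2 (Or.inl hx))

theorem mem_labels_node_of_mem_right {p x : α} {l r : BTree α} (hx : x ∈ r.labels) :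
    x ∈ (node p l r).labels :=
  Multiset.mem_cons_of_mem (Multiset.mem_add.2 (Or.inr hx))

end BTree

section Makespan

variable {η : ℝ × ℝ → ℝ} {C : Set (ℝ × ℝ)} {w : ℝ}

theorem makespan_le_of_isHeap (hw : 0 ≤ w) (hC : ∀ x ∈ C, η x ≤ 1)
    (hedge : ∀ p ∈ C, ∀ q ∈ C, η q ≤ η p → η (p - q) ≤ η p - η q + w)
    {T : BTree (ℝ × ℝ)} (hT : T.IsHeap η) (hTC : ∀ x ∈ T.labels, x ∈ C)
    {s : ℝ × ℝ} (hs : s ∈ C) (hsT : ∀ x ∈ T.labels, η s ≤ η x) :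
    makespan η s T ≤ 1 - η s + w * T.height := by
  induction T generalizing s with
  | nil => simpa [makespan, BTree.height] using hC s hs
  | node q l r ihl ihr =>
    obtain ⟨hq, hl, hr⟩ := hT
    have hqC := hTC q (Multiset.mem_cons_self _ _)
    have hmax : max (makespan η q l) (makespan η q r) ≤
        1 - η q + w * max l.height r.height := by
      rw [Nat.cast_max, mul_max_of_nonneg _ _ hw, ← max_add_add_left]
      refine max_le_max
        (ihl hl (fun x hx => hTC x (BTree.mem_labels_node_of_mem_left hx)) hqC ?_)
        (ihr hr (fun x hx => hTC x (BTree.mem_labels_node_of_mem_right hx)) hqC ?_)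
      · exact fun x hx => hq x (Multiset.mem_add.2 (Or.inl hx))
      · exact fun x hx => hq x (Multiset.mem_add.2 (Or.inr hx))
    have hsq := hedge q hqC s hs (hsT q (Multiset.mem_cons_self _ _))
    simp only [makespan, BTree.height, Nat.cast_add, Nat.cast_one]
    linarith

theorem makespan_node_le_of_isHeap (hw : 0 ≤ w) (hC : ∀ x ∈ C, η x ≤ 1)
    (hedge : ∀ p ∈ C, ∀ q ∈ C, η q ≤ η p → η (p - q) ≤ η p - η q + w)
    {p : ℝ × ℝ} {l r : BTree (ℝ × ℝ)} (hT : (BTree.node p l r).IsHeap η)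
    (hTC : ∀ x ∈ (BTree.node p l r).labels, x ∈ C) (s : ℝ × ℝ) :
    makespan η s (.node p l r) ≤ η (p - s) + (1 - η p) + w * max l.height r.height := by
  obtain ⟨hp, hl, hr⟩ := hT
  have hpC := hTC p (Multiset.mem_cons_self _ _)
  rw [makespan, add_assoc]
  gcongr η (p - s) + ?_
  rw [Nat.cast_max, mul_max_of_nonneg _ _ hw, ← max_add_add_left]
  refine max_le_max
    (makespan_le_of_isHeap hw hC hedge hl
      (fun x hx => hTC x (BTree.mem_labels_node_of_mem_left hx)) hpC ?_)
    (makespan_le_of_isHeap hw hC hedge hr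
      (fun x hx => hTC x (BTree.mem_labels_node_of_mem_right hx)) hpC ?_)
  · exact fun x hx => hp x (Multiset.mem_add.2 (Or.inl hx))
  · exact fun x hx => hp x (Multiset.mem_add.2 (Or.inr hx))

end Makespan

theorem List.exists_perm_pairwise_le {α : Type*} (f : α → ℝ) (l : List α) :
    ∃ l' : List α, l'.Perm l ∧ l'.Pairwise (fun a b => f a ≤ f b) := by
  classical
  let r : α → α → Prop := fun a b => f a ≤ f b
  have : Std.Total r := ⟨fun a b => le_total (f a) (f b)⟩
  have : IsTrans α r := ⟨fun _ _ _ => le_trans⟩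
  exact ⟨l.insertionSort r, List.perm_insertionSort r l, List.pairwise_insertionSort r l⟩

theorem ftp_cone_heap_strategy_general (η : ℝ × ℝ → ℝ) (hη : IsNorm η) (α w : ℝ)
    (hw0 : 0 ≤ w)
    (ps : List (ℝ × ℝ)) (hin : ∀ p ∈ ps, p ∈ cone η α w) :
    ∃ T : BTree (ℝ × ℝ), T.labels = ↑ps ∧
      makespan η 0 T ≤ 1 + w * (Nat.log 2 ps.length : ℝ) := by
  obtain ⟨l, hperm, hsorted⟩ := ps.exists_perm_pairwise_le η
  refine ⟨BTree.heapOf l, by rw [BTree.labels_heapOf, Multiset.coe_eq_coe]; exact hperm, ?_⟩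
  have hheap := BTree.isHeap_heapOf η hsorted
  have hheight := BTree.height_heapOf_le (Nat.lt_pow_succ_log_self one_lt_two l.length)
  have hlabels : ∀ x ∈ (BTree.heapOf l).labels, x ∈ cone η α w := fun x hx =>
    hin x (hperm.subset (by simpa [BTree.labels_heapOf] using hx))
  rw [← hperm.length_eq]
  cases l with
  | nil => simp only [BTree.heapOf, makespan]; positivity
  | cons p rest =>
    rw [BTree.heapOf] at hheap hheight hlabels ⊢
    rw [BTree.height, Nat.succ_le_succ_iff] at hheight
    refine (makespan_node_le_of_isHeap hw0 (fun _ => hη.le_one_of_mem_cone)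
      (fun _ hp _ hq => hη.sub_le_of_mem_cone hp hq) hheap hlabels 0).trans ?_
    rw [sub_zero, add_sub_cancel]
    gcongr

/-- Heap-Strategy bound: if `n ≥ 1` points lie in a cone of arc-length
`w ∈ [0, 2π(η))` with apex at the origin, then there is a wake-up tree rooted at the origin
of makespan at most `1 + w·⌊log₂ n⌋`. -/
theorem ftp_cone_heap_strategy (η : ℝ × ℝ → ℝ) (hη : IsNorm η) (α w : ℝ)
    (hw0 : 0 ≤ w) (hw : w < 2 * piEta η)
    (ps : List (ℝ × ℝ)) (hne : 1 ≤ ps.length) (hin : ∀ p ∈ ps, p ∈ cone η α w) :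
    ∃ T : BTree (ℝ × ℝ), T.labels = ↑ps ∧
      makespan η 0 T ≤ 1 + w * (Nat.log 2 ps.length : ℝ) :=
  ftp_cone_heap_strategy_general η hη α w hw0 ps hin
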